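/- If y, z ∈ [0,1]^n are nondecreasing with y_i ≤ z_i for all i, then m_α(y) ≤ m_α(z), where m_α(z) is the (1-α)-quantile of the random variable m(z,U) = 1 - ∑_{i=1}^n U_i(z_{i+1} - z_i), with U the order statistics of n i.i.d. Uniform[0,1] random variables and z_{n+1} := 1. -/

import Mathlib

open MeasureTheory

noncomputable section

def sortVec {n : ℕ} (x : Fin n → ℝ) : Fin n → ℝ := x ∘ Tuple.sort x

def unifCube (n : ℕ) : Measure (Fin n → ℝ) :=
  Measure.pi fun _ => volume.restrict (Set.Icc (0:ℝ) 1)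

def mInd {n : ℕ} (z u : Fin n → ℝ) : ℝ :=
  1 - ∑ i : Fin n, u i * ((Fin.snoc z 1 : Fin (n+1) → ℝ) i.succ - z i)

def quant (p : ℝ) {Ω : Type*} [MeasurableSpace Ω] (μ : Measure Ω) (Y : Ω → ℝ) : ℝ :=
  sInf {t : ℝ | ENNReal.ofReal p ≤ μ {ω | Y ω ≤ t}}

def mAlpha {n : ℕ} (α : ℝ) (z : Fin n → ℝ) : ℝ :=
  quant (1 - α) (unifCube n) (fun ω => mInd z (sortVec ω))

def betaCDF (a b : ℕ) (p : ℝ) : ℝ :=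
  (Real.Gamma ((a : ℝ) + b) / (Real.Gamma a * Real.Gamma b)) *
    ∫ t in (0:ℝ)..p, t ^ (a - 1) * (1 - t) ^ (b - 1)

def halfBern (k p : ℝ) : Measure ℝ :=
  ENNReal.ofReal p • Measure.dirac k + ENNReal.ofReal (1 - p) • Measure.dirac 1

def consComp (n : ℕ) (z u : ℕ → ℝ) (x : ℝ) : ℝ :=
  if 1 ≤ x then 1
  else WithBot.unbotD 0 (((Finset.Icc 1 n).filter (fun i => z i ≤ x)).image u).max

/-!
Summation by parts gives `m(z,u) = (1 - u_n) + ∑ᵢ (u_i - u_{i-1}) z_i` (with `u_0 = 0`), whose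
coefficients are nonnegative when `u` is sorted in `[0,1]`. Hence `m(y,U) ≤ m(z,U)` almost surely,
and a quantile is monotone under almost sure domination of (bounded) random variables.
-/

theorem quant_mono_of_ae_le {Ω : Type*} [MeasurableSpace Ω] {μ : Measure Ω} {Y Z : Ω → ℝ}
    {a b : ℝ} (hYZ : Y ≤ᵐ[μ] Z) (hY : ∀ᵐ ω ∂μ, a ≤ Y ω) (hZ : ∀ᵐ ω ∂μ, Z ω ≤ b) (p : ℝ) :
    quant p μ Y ≤ quant p μ Z := by
  unfold quant
  set SY := {t : ℝ | ENNReal.ofReal p ≤ μ {ω | Y ω ≤ t}}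
  set SZ := {t : ℝ | ENNReal.ofReal p ≤ μ {ω | Z ω ≤ t}}
  have hsub : SZ ⊆ SY := fun t ht =>
    ht.trans (measure_mono_ae (hYZ.mono fun ω hle (hZt : Z ω ≤ t) => hle.trans hZt))
  rcases le_or_gt p 0 with hp | hp
  · have hSY : SY = SZ := by simp [SY, SZ, ENNReal.ofReal_eq_zero.2 hp]
    rw [hSY]
  rcases SZ.eq_empty_or_nonempty with hSZ | hSZ
  · have hSY : SY = ∅ := Set.eq_empty_of_forall_notMem fun t ht => by
      have hb : b ∈ SZ := ht.trans <| (measure_mono (Set.subset_univ _)).trans <|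
        measure_mono_ae (hZ.mono fun ω h _ => h)
      simp [hSZ] at hb
    rw [hSY, hSZ]
  refine csInf_le_csInf ⟨a, fun t ht => ?_⟩ hSZ hsub
  by_contra! hta
  have hnull : μ {ω | Y ω ≤ t} = 0 :=
    measure_eq_zero_iff_ae_notMem.2 (hY.mono fun ω h hYt => (hta.trans_le h).not_ge hYt)
  exact (ENNReal.ofReal_pos.2 hp).not_ge (hnull ▸ ht)

theorem sum_range_mul_sub_succ_add_nonneg {U W : ℕ → ℝ} (hU : Monotone U) (hU0 : 0 ≤ U 0)
    (hW : 0 ≤ W) (n : ℕ) :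
    0 ≤ ∑ i ∈ Finset.range n, U i * (W i - W (i + 1)) + U n * W n := by
  induction n with
  | zero => simpa using mul_nonneg hU0 (hW 0)
  | succ n ih =>
    rw [Finset.sum_range_succ]
    nlinarith [mul_nonneg (sub_nonneg.2 (hU n.le_succ)) (hW (n + 1))]

def extendOne {n : ℕ} (x : Fin n → ℝ) (j : ℕ) : ℝ := if h : j < n then x ⟨j, h⟩ else 1

section extendOne

variable {n : ℕ} (x : Fin n → ℝ)

theorem extendOne_of_lt {j : ℕ} (h : j < n) : extendOne x j = x ⟨j, h⟩ := dif_pos h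

theorem extendOne_of_le {j : ℕ} (h : n ≤ j) : extendOne x j = 1 := dif_neg h.not_gt

theorem snoc_one_eq_extendOne (j : Fin (n + 1)) :
    (Fin.snoc x (1 : ℝ) : Fin (n + 1) → ℝ) j = extendOne x j := by
  rcases j with ⟨j, _⟩
  simp [Fin.snoc, Fin.castLT, extendOne]

theorem monotone_extendOne (hx : Monotone x) (hx1 : ∀ i, x i ≤ 1) : Monotone (extendOne x) := by
  refine monotone_nat_of_le_succ fun j => ?_
  rcases lt_or_ge (j + 1) n with h | h
  · rw [extendOne_of_lt x h, extendOne_of_lt x (Nat.lt_of_succ_lt h)]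
    exact hx (Fin.mk_le_mk.2 j.le_succ)
  · rw [extendOne_of_le x h]
    rcases lt_or_ge j n with h' | h'
    · exact (extendOne_of_lt x h').trans_le (hx1 _)
    · exact (extendOne_of_le x h').le

theorem mInd_eq_sum_range (z : Fin n → ℝ) :
    mInd z x = 1 - ∑ i ∈ Finset.range n, extendOne x i * (extendOne z (i + 1) - extendOne z i) := by
  rw [mInd, ← Fin.sum_univ_eq_sum_range
    (fun i => extendOne x i * (extendOne z (i + 1) - extendOne z i))]
  refine congrArg _ (Finset.sum_congr rfl fun i _ => ?_)
  rw [snoc_one_eq_extendOne, extendOne_of_lt x i.isLt, extendOne_of_lt z i.isLt, Fin.val_succ]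

end extendOne

theorem mInd_le_mInd {n : ℕ} {y z u : Fin n → ℝ} (hyz : y ≤ z) (hu : Monotone u)
    (hu01 : ∀ i, u i ∈ Set.Icc (0 : ℝ) 1) : mInd y u ≤ mInd z u := by
  set U := extendOne u
  set W := extendOne z - extendOne y
  have hW : 0 ≤ W := fun j => by
    rcases lt_or_ge j n with h | h
    · simpa [W, extendOne_of_lt _ h] using hyz _
    · simp [W, extendOne_of_le _ h]
  have hU0 : 0 ≤ U 0 := by
    rcases Nat.eq_zero_or_pos n with h | h
    · simp [U, extendOne_of_le _ h.le]
    · simpa [U, extendOne_of_lt _ h] using (hu01 _).1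
  have hsum := sum_range_mul_sub_succ_add_nonneg
    (monotone_extendOne u hu fun i => (hu01 i).2) hU0 hW n
  have hdiff : mInd z u - mInd y u
      = ∑ i ∈ Finset.range n, U i * (W i - W (i + 1)) + U n * W n := by
    simp only [mInd_eq_sum_range, W, Pi.sub_apply, extendOne_of_le _ le_rfl, sub_self, mul_zero,
      add_zero]
    rw [sub_sub_sub_cancel_left, ← Finset.sum_sub_distrib]
    exact Finset.sum_congr rfl fun i _ => by ring
  linarith

theorem abs_mInd_le {n : ℕ} (z u : Fin n → ℝ) (hu : ∀ i, |u i| ≤ 1) :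
    |mInd z u| ≤ 1 + ∑ i : Fin n, |(Fin.snoc z 1 : Fin (n + 1) → ℝ) i.succ - z i| := by
  calc |mInd z u|
      ≤ |1| + |∑ i : Fin n, u i * ((Fin.snoc z 1 : Fin (n + 1) → ℝ) i.succ - z i)| :=
        abs_sub _ _
    _ ≤ 1 + ∑ i : Fin n, |u i * ((Fin.snoc z 1 : Fin (n + 1) → ℝ) i.succ - z i)| := by
        rw [abs_one]; exact add_le_add_right (Finset.abs_sum_le_sum_abs _ _) 1
    _ ≤ 1 + ∑ i : Fin n, |(Fin.snoc z 1 : Fin (n + 1) → ℝ) i.succ - z i| :=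
        add_le_add_right (Finset.sum_le_sum fun i _ => by
          rw [abs_mul]; exact mul_le_of_le_one_left (abs_nonneg _) (hu i)) 1

theorem ae_sortVec_mem_Icc (n : ℕ) :
    ∀ᵐ ω ∂unifCube n, ∀ i, sortVec ω i ∈ Set.Icc (0 : ℝ) 1 := by
  have hmem : ∀ᵐ ω ∂unifCube n, ∀ i, ω i ∈ Set.Icc (0 : ℝ) 1 :=
    Filter.eventually_all.2 fun _ =>
      Measure.tendsto_eval_ae_ae.eventually (ae_restrict_mem measurableSet_Icc)
  filter_upwards [hmem] with ω hω i using hω _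

theorem stmt3_general (n : ℕ) (y z : Fin n → ℝ)
    (hyz : ∀ i, y i ≤ z i) (α : ℝ) :
    mAlpha α y ≤ mAlpha α z := by
  have hbound : ∀ x : Fin n → ℝ, ∃ C, ∀ᵐ ω ∂unifCube n, |mInd x (sortVec ω)| ≤ C := fun x =>
    ⟨_, (ae_sortVec_mem_Icc n).mono fun ω hω =>
      abs_mInd_le x _ fun i => abs_le.2 ⟨by linarith [(hω i).1], (hω i).2⟩⟩
  obtain ⟨Cy, hCy⟩ := hbound y
  obtain ⟨Cz, hCz⟩ := hbound z
  refine quant_mono_of_ae_le ?_ (hCy.mono fun ω h => neg_le_of_abs_le h)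
    (hCz.mono fun ω h => le_of_abs_le h) (1 - α)
  filter_upwards [ae_sortVec_mem_Icc n] with ω hω
  exact mInd_le_mInd hyz (Tuple.monotone_sort ω) hω

/-- Monotonicity of m_α(z) in z, where m_α(z) is the (1-α)-quantile of m(z,U) and U
are the order statistics of n i.i.d. Uniform[0,1] random variables. -/
theorem stmt3 (n : ℕ) (y z : Fin n → ℝ)
    (hymono : Monotone y) (hy : ∀ i, y i ∈ Set.Icc (0:ℝ) 1)
    (hzmono : Monotone z) (hz : ∀ i, z i ∈ Set.Icc (0:ℝ) 1)
    (hyz : ∀ i, y i ≤ z i) (α : ℝ) (hα : α ∈ Set.Icc (0:ℝ) 1) :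
    mAlpha α y ≤ mAlpha α z :=
  stmt3_general n y z hyz α

end
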